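/- arXiv:1802.08699 — 2 statements merged into one kernel-verified Lean document; each statement's English description precedes it below -/
import Mathlib

section
/- For all integers $N \geq 4$ and $m \geq 3$, one has $\binom{m(m+N-1)+1}{N} > \binom{m+N-1}{N}(m+1)^N$. -/
/-!
Multiply both sides by `N!` and write `K = m + N - 1`: the claim becomes
`∏_{i<N} (K - i)(m + 1) < ∏_{i<N} (mK + 1 - i)`. The factors cannot be compared one by one
(`(m + 1)K > mK + 1`), but after squaring each product and pairing the factor `i` with the factor
`N - 1 - i`, every pair on the right dominates the corresponding pair on the left, strictly for the
outermost pair. This is a polynomial inequality in `m` and the two indices, valid except for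
`m = 3, N = 4`, which is checked directly.
-/

open Finset

theorem Finset.prod_range_lt_prod_range_of_mul_reflect {R : Type*} [CommSemiring R]
    [LinearOrder R] [IsStrictOrderedRing R] {f g : ℕ → R} {n : ℕ}
    (hg : ∀ i < n, 0 < g i) (hf : ∀ i < n, 0 ≤ f i)
    (hle : ∀ i < n, g i * g (n - 1 - i) ≤ f i * f (n - 1 - i))
    (hlt : ∃ i < n, g i * g (n - 1 - i) < f i * f (n - 1 - i)) :
    ∏ i ∈ range n, g i < ∏ i ∈ range n, f i := by
  have hsq (h : ℕ → R) : (∏ i ∈ range n, h i) ^ 2 = ∏ i ∈ range n, h i * h (n - 1 - i) := by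
    rw [sq, prod_mul_distrib, prod_range_reflect h n]
  refine lt_of_pow_lt_pow_left₀ 2 (prod_nonneg fun i hi => hf i (mem_range.1 hi)) ?_
  rw [hsq, hsq]
  obtain ⟨i, hi, hlt⟩ := hlt
  refine prod_lt_prod (fun i hi => ?_) (fun i hi => hle i (mem_range.1 hi))
    ⟨i, mem_range.2 hi, hlt⟩
  have hi := mem_range.1 hi
  exact mul_pos (hg i hi) (hg _ (by omega))

/- With `x = m - 3` and `y = i + j - 3`, four times the difference of the two sides is
`(m² + 2m)(i - j)²` plus a polynomial in `x, y` whose only negative coefficient is the constant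
`-71`, which `36x` or `62y` outweighs as soon as `x + y ≥ 1`. -/
lemma sq_succ_mul_le_of_three_le (m i j : ℕ) (hm : 3 ≤ m) (hij : 3 ≤ i + j)
    (h7 : 7 ≤ m + i + j) :
    (m + 1) ^ 2 * ((m + i) * (m + j)) ≤
      (m * (m + i + j) + 1 - i) * (m * (m + i + j) + 1 - j) := by
  have hi : i ≤ m * (m + i + j) + 1 := by nlinarith
  have hj : j ≤ m * (m + i + j) + 1 := by nlinarith
  zify [hi, hj] at *
  have hx := sub_nonneg.2 hm
  have hy := sub_nonneg.2 hij
  nlinarith [mul_nonneg (by nlinarith : (0 : ℤ) ≤ m ^ 2 + 2 * m) (sq_nonneg ((i : ℤ) - j)),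
    mul_nonneg hx hy, mul_nonneg (mul_nonneg hx hx) hy, mul_nonneg (mul_nonneg hx hy) hy,
    mul_nonneg (mul_nonneg hx hx) hx]

lemma sq_succ_mul_lt_of_three_le (m j : ℕ) (hm : 3 ≤ m) (hj : 3 ≤ j) :
    (m + 1) ^ 2 * (m * (m + j)) < (m * (m + j) + 1) * (m * (m + j) + 1 - j) := by
  have hj' : j ≤ m * (m + j) + 1 := by nlinarith
  zify [hj'] at *
  have hx := sub_nonneg.2 hm
  have hy := sub_nonneg.2 hj
  nlinarith [mul_nonneg hx hy, mul_nonneg (mul_nonneg hx hx) hy,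
    mul_nonneg (mul_nonneg hx hy) hy, mul_nonneg (mul_nonneg hx hx) hx]

lemma descFactorial_mul_succ_pow_lt (N m : ℕ) (hN : 4 ≤ N) (hm : 3 ≤ m) (h8 : 8 ≤ m + N) :
    (m + N - 1).descFactorial N * (m + 1) ^ N < (m * (m + N - 1) + 1).descFactorial N := by
  set K := m + N - 1
  rw [Nat.descFactorial_eq_prod_range, Nat.descFactorial_eq_prod_range, pow_eq_prod_const,
    ← prod_mul_distrib]
  apply prod_range_lt_prod_range_of_mul_reflect
  · intro i hi
    exact Nat.mul_pos (by omega) (by omega)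
  · exact fun _ _ => Nat.zero_le _
  · intro i hi
    set j := N - 1 - i
    have hK : K = m + i + j := by omega
    have hpair := sq_succ_mul_le_of_three_le m i j hm (by omega) (by omega)
    rw [← hK] at hpair
    rw [show K - i = m + j by omega, show K - j = m + i by omega]
    linarith
  · refine ⟨0, by omega, ?_⟩
    have hpair := sq_succ_mul_lt_of_three_le m (N - 1) hm (by omega)
    rw [show m + (N - 1) = K by omega] at hpair
    rw [Nat.sub_zero, Nat.sub_zero, Nat.sub_zero, show K - (N - 1) = m by omega]
    linarith

theorem stmt_1 (N m : ℕ) (hN : 4 ≤ N) (hm : 3 ≤ m) :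
    Nat.choose (m * (m + N - 1) + 1) N > Nat.choose (m + N - 1) N * (m + 1) ^ N := by
  obtain ⟨rfl, rfl⟩ | h8 : (N = 4 ∧ m = 3) ∨ 8 ≤ m + N := by omega
  · decide
  refine Nat.lt_of_mul_lt_mul_left (a := N.factorial) ?_
  rw [← mul_assoc, ← Nat.descFactorial_eq_factorial_mul_choose,
    ← Nat.descFactorial_eq_factorial_mul_choose]
  exact descFactorial_mul_succ_pow_lt N m hN hm h8
end

section
/- For all integers $m \geq 3$ and $m \geq 3$, the inequality $\binom{m(m+3)+1}{4} > \binom{m+3}{4}(m+1)^4$ holds. -/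
/-!
Multiplying by `4!` turns both binomial coefficients into falling factorials. With
`x = m (m + 3)` one has `(m + 3)(m + 2)(m + 1) m = x (x + 2)` and the left side becomes
`(x + 1) x (x - 1) (x - 2)`, so after cancelling `x` the claim is the cubic inequality
`(x + 2)(m + 1)^4 < (x + 1)(x - 1)(x - 2)`.
-/

lemma Nat.descFactorial_four (n : ℕ) :
    (n + 3).descFactorial 4 = (n + 3) * (n + 2) * (n + 1) * n := by
  simp [Nat.descFactorial_succ]
  ring

/-- Writing `m = a + 3`, so that `(m + 1)^2 = x - a - 2`, the difference of the two sides is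
`a x (2x - a) + 3x - 2(a + 2)^2 + 2 > 0`. -/
lemma add_two_mul_pow_four_lt (m : ℤ) (hm : 3 ≤ m) :
    (m * (m + 3) + 2) * (m + 1) ^ 4 <
      (m * (m + 3) + 1) * (m * (m + 3) - 1) * (m * (m + 3) - 2) := by
  obtain ⟨a, ha, rfl⟩ : ∃ a : ℤ, 0 ≤ a ∧ m = a + 3 := ⟨m - 3, by omega, by ring⟩
  set x := (a + 3) * (a + 3 + 3) with hx
  have hax : a ≤ x := by nlinarith
  have hsq : (a + 3 + 1) ^ 4 = (x - a - 2) ^ 2 := by rw [hx]; ring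
  rw [hsq]
  nlinarith [mul_nonneg (mul_nonneg ha (by nlinarith : (0 : ℤ) ≤ x)) (by nlinarith : 0 ≤ 2 * x - a)]

lemma descFactorial_four_mul_pow_four_lt (m : ℕ) (hm : 3 ≤ m) :
    (m + 3).descFactorial 4 * (m + 1) ^ 4 < (m * (m + 3) + 1).descFactorial 4 := by
  obtain ⟨y, hy⟩ := Nat.exists_eq_add_of_le' (show 2 ≤ m * (m + 3) by nlinarith)
  rw [show m * (m + 3) + 1 = y + 3 by omega, Nat.descFactorial_four, Nat.descFactorial_four]
  have hyz : (y : ℤ) = m * (m + 3) - 2 := by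
    have := congrArg (Nat.cast : ℕ → ℤ) hy
    push_cast at this
    linarith
  zify
  rw [hyz]
  have hcubic := mul_lt_mul_of_pos_left (add_two_mul_pow_four_lt m (by exact_mod_cast hm))
    (by positivity : (0 : ℤ) < m * (m + 3))
  linear_combination hcubic

theorem stmt_3 (m : ℕ) (hm : 3 ≤ m) :
    Nat.choose (m * (m + 3) + 1) 4 > Nat.choose (m + 3) 4 * (m + 1) ^ 4 := by
  have h := descFactorial_four_mul_pow_four_lt m hm
  rw [Nat.descFactorial_eq_factorial_mul_choose, Nat.descFactorial_eq_factorial_mul_choose,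
    mul_assoc] at h
  exact Nat.lt_of_mul_lt_mul_left h
end
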